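/- arXiv:1709.01434 — 5 statements merged into one kernel-verified Lean document; each statement's English description precedes it below -/
import Mathlib

section
/- Let n ≥ 1, let f_1, ..., f_n : ℝ^d → ℝ each be differentiable with L-Lipschitz gradient (L > 0), and let f = (1/n)∑_{i=1}^n f_i. Fix x̃ ∈ ℝ^d and η = 1/(4 L n^{2/3}), set m = n, and for an index sequence σ = (i_0, ..., i_{m−1}) ∈ {1,...,n}^m define iterates x_0^σ = x̃ and x_{t+1}^σ = x_t^σ − η(∇f_{i_t}(x_t^σ) − ∇f_{i_t}(x̃) + ∇f(x̃)). Then for every j ∈ {0, 1, ..., m}, the average over all n^m index sequences satisfies (1/n^m) ∑_σ f(x_j^σ) ≤ f(x̃). -/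
/-!
The expected objective is controlled by the Lyapunov function
`R_t = 𝔼[F(x_t) + c_t ‖x_t - x̃‖²]`, where `c_m = 0` and `c_t = γ + (1 + θ) c_{t+1}` with
`γ = L³η²/2`, `θ = ηβ + η²L²` and `β = L / n^{1/3}`. The descent lemma for the `L`-smooth `F`,
the unbiasedness of the SVRG direction `v_t` given the past, Young's inequality and the variance
bound `𝔼‖v_t‖² ≤ L² 𝔼‖x_t - x̃‖² + 𝔼‖∇F(x_t)‖²` give
`R_{t+1} ≤ R_t - (η - Lη²/2 - c_{t+1}(η/β + η²)) 𝔼‖∇F(x_t)‖²`. For `η = 1/(4Ln^{2/3})` one has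
`mθ ≤ 1`, so `(1 + θ)^m ≤ e` and `c_t ≤ 3γm = O(L / n^{1/3})`; the bracket is then positive and
`𝔼 F(x_j) ≤ R_j ≤ R_0 = F(x̃)`.
-/

open Finset
open scoped RealInnerProductSpace

section InnerProduct

variable {E : Type*} [NormedAddCommGroup E] [InnerProductSpace ℝ E]

theorem neg_two_mul_inner_le (u w : E) {β : ℝ} (hβ : 0 < β) :
    -(2 * ⟪u, w⟫) ≤ β * ‖u‖ ^ 2 + ‖w‖ ^ 2 / β := by
  have h := norm_add_sq_real (β • u) w
  rw [real_inner_smul_left, norm_smul, Real.norm_of_nonneg hβ.le] at h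
  rw [← sub_nonneg, ← mul_nonneg_iff_of_pos_left hβ]
  have : β * (β * ‖u‖ ^ 2 + ‖w‖ ^ 2 / β - -(2 * ⟪u, w⟫)) = ‖β • u + w‖ ^ 2 := by
    rw [h]; field_simp; ring
  exact this ▸ sq_nonneg _

theorem sum_norm_add_sq_of_sum_eq_zero {ι : Type*} [Fintype ι] {b : ι → E}
    (hb : ∑ i, b i = 0) (c : E) :
    ∑ i, ‖b i + c‖ ^ 2 = ∑ i, ‖b i‖ ^ 2 + Fintype.card ι * ‖c‖ ^ 2 := by
  simp only [norm_add_sq_real, sum_add_distrib, ← mul_sum, ← sum_inner, hb, inner_zero_left,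
    sum_const, card_univ, nsmul_eq_mul]
  ring

theorem norm_sub_le_of_sum_eq_card_smul {ι : Type*} [Fintype ι] [Nonempty ι] {g : ι → E → E}
    {G : E → E} {L : ℝ} (hG : ∀ x, ∑ i, g i x = (Fintype.card ι : ℝ) • G x)
    (hlip : ∀ i a b, ‖g i a - g i b‖ ≤ L * ‖a - b‖) (a b : E) :
    ‖G a - G b‖ ≤ L * ‖a - b‖ := by
  have hcard : (0 : ℝ) < Fintype.card ι := by exact_mod_cast Fintype.card_pos
  refine le_of_mul_le_mul_left ?_ hcard
  calc (Fintype.card ι : ℝ) * ‖G a - G b‖ = ‖∑ i, (g i a - g i b)‖ := by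
        rw [sum_sub_distrib, hG, hG, ← smul_sub, norm_smul, Real.norm_of_nonneg hcard.le]
    _ ≤ ∑ i, L * ‖a - b‖ := (norm_sum_le _ _).trans (sum_le_sum fun i _ => hlip i a b)
    _ = Fintype.card ι * (L * ‖a - b‖) := by rw [sum_const, card_univ, nsmul_eq_mul]

end InnerProduct

section Smooth

variable {E : Type*} [NormedAddCommGroup E] [InnerProductSpace ℝ E] [CompleteSpace E]

theorem hasDerivAt_comp_add_smul {h : E → ℝ} (hd : Differentiable ℝ h) (x v : E) (t : ℝ) :
    HasDerivAt (fun s : ℝ => h (x + s • v)) ⟪gradient h (x + t • v), v⟫ t := by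
  have hline : HasDerivAt (fun s : ℝ => x + s • v) v t := by
    simpa using ((hasDerivAt_id t).smul_const v).const_add x
  simpa [Function.comp_def] using
    (hd _).hasGradientAt.hasFDerivAt.comp_hasDerivAt t hline

theorem le_add_inner_gradient_add_sq {h : E → ℝ} (hd : Differentiable ℝ h) {L : ℝ}
    (hlip : ∀ a b, ‖gradient h a - gradient h b‖ ≤ L * ‖a - b‖) (x y : E) :
    h y ≤ h x + ⟪gradient h x, y - x⟫ + L / 2 * ‖y - x‖ ^ 2 := by
  set v := y - x
  let ψ : ℝ → ℝ := fun t => h (x + t • v) - t * ⟪gradient h x, v⟫ - L / 2 * t ^ 2 * ‖v‖ ^ 2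
  have hψ : ∀ t, HasDerivAt ψ
      (⟪gradient h (x + t • v), v⟫ - ⟪gradient h x, v⟫ - L * t * ‖v‖ ^ 2) t := fun t => by
    have hsq := ((hasDerivAt_pow 2 t).const_mul (L / 2)).mul_const (‖v‖ ^ 2)
    exact ((hasDerivAt_comp_add_smul hd x v t).sub
      ((hasDerivAt_id t).mul_const ⟪gradient h x, v⟫)).sub hsq |>.congr_deriv (by push_cast; ring)
  have hψ' : ∀ t ∈ interior (Set.Icc (0 : ℝ) 1), deriv ψ t ≤ 0 := by
    intro t ht
    rw [interior_Icc] at ht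
    have hnorm : ‖x + t • v - x‖ = t * ‖v‖ := by
      rw [add_sub_cancel_left, norm_smul, Real.norm_of_nonneg ht.1.le]
    have := calc ⟪gradient h (x + t • v), v⟫ - ⟪gradient h x, v⟫
        = ⟪gradient h (x + t • v) - gradient h x, v⟫ := (inner_sub_left _ _ _).symm
      _ ≤ ‖gradient h (x + t • v) - gradient h x‖ * ‖v‖ := real_inner_le_norm _ _
      _ ≤ L * (t * ‖v‖) * ‖v‖ := by
          rw [← hnorm]; exact mul_le_mul_of_nonneg_right (hlip _ _) (norm_nonneg v)
    rw [(hψ t).deriv]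
    nlinarith
  have hmono := antitoneOn_of_deriv_nonpos (convex_Icc 0 1)
    (fun t _ => (hψ t).continuousAt.continuousWithinAt)
    (fun t _ => (hψ t).differentiableAt.differentiableWithinAt) hψ'
    (Set.left_mem_Icc.2 zero_le_one) (Set.right_mem_Icc.2 zero_le_one) zero_le_one
  simp only [ψ, one_smul, zero_smul, add_zero, v, add_sub_cancel] at hmono
  linarith

theorem hasGradientAt_const_mul_sum {ι : Type*} {s : Finset ι} {f : ι → E → ℝ} {x : E}
    (hf : ∀ i ∈ s, DifferentiableAt ℝ (f i) x) (c : ℝ) :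
    HasGradientAt (fun y => c * ∑ i ∈ s, f i y) (c • ∑ i ∈ s, gradient (f i) x) x := by
  rw [hasGradientAt_iff_hasFDerivAt, map_smul, map_sum]
  exact (HasFDerivAt.fun_sum fun i hi => (hf i hi).hasGradientAt.hasFDerivAt).const_mul c

end Smooth

theorem Fintype.card_mul_sum_apply_self_eq_sum_sum {ι α : Type*} [Fintype ι] [DecidableEq ι]
    [Fintype α] (p : ι) {G : (ι → α) → α → ℝ}
    (hG : ∀ σ a k, G (Function.update σ p a) k = G σ k) :
    Fintype.card α * ∑ σ, G σ (σ p) = ∑ σ, ∑ k, G σ k := by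
  let swap : (ι → α) × α → (ι → α) × α := fun q => (Function.update q.1 p q.2, q.1 p)
  have hswap : Function.Involutive swap := fun q => by simp [swap]
  calc Fintype.card α * ∑ σ, G σ (σ p) = ∑ q : (ι → α) × α, G q.1 (q.1 p) := by
        rw [Fintype.sum_prod_type, mul_sum]; simp
    _ = ∑ q : (ι → α) × α, G (swap q).1 ((swap q).1 p) :=
        (Equiv.sum_comp hswap.toPerm _).symm
    _ = ∑ σ, ∑ k, G σ k := by simp [swap, hG, Fintype.sum_prod_type]

theorem apply_update_eq_of_le {α β : Type*} {m : ℕ} {X : (Fin m → α) → ℕ → β} {g : α → β → β}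
    (h0 : ∀ σ τ, X σ 0 = X τ 0) (hstep : ∀ σ t (ht : t < m), X σ (t + 1) = g (σ ⟨t, ht⟩) (X σ t))
    {p : Fin m} (σ : Fin m → α) (a : α) : ∀ t ≤ (p : ℕ), X (Function.update σ p a) t = X σ t
  | 0, _ => h0 _ _
  | t + 1, ht => by
    have htm : t < m := by omega
    rw [hstep _ t htm, hstep σ t htm, apply_update_eq_of_le h0 hstep σ a t (by omega),
      Function.update_of_ne (by simp [Fin.ext_iff]; omega)]

section Lyapunov

/-- The weight `c_t` of `‖x_t - x̃‖²` in the Lyapunov function, indexed by the number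
`k = m - t` of remaining steps. -/
def lyapunovCoeff (γ θ : ℝ) : ℕ → ℝ
  | 0 => 0
  | k + 1 => γ + (1 + θ) * lyapunovCoeff γ θ k

variable {γ θ : ℝ}

theorem lyapunovCoeff_nonneg (hγ : 0 ≤ γ) (hθ : 0 ≤ θ) : ∀ k, 0 ≤ lyapunovCoeff γ θ k
  | 0 => le_rfl
  | k + 1 => by have := lyapunovCoeff_nonneg hγ hθ k; simp only [lyapunovCoeff]; positivity

theorem lyapunovCoeff_le (hγ : 0 ≤ γ) (hθ : 0 ≤ θ) :
    ∀ k, lyapunovCoeff γ θ k ≤ γ * k * (1 + θ) ^ k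
  | 0 => by simp [lyapunovCoeff]
  | k + 1 => by
    have ih := lyapunovCoeff_le hγ hθ k
    have hpow : 1 ≤ (1 + θ) ^ (k + 1) := one_le_pow₀ (by linarith)
    calc lyapunovCoeff γ θ (k + 1) ≤ γ * (1 + θ) ^ (k + 1) + (1 + θ) * (γ * k * (1 + θ) ^ k) :=
          add_le_add (le_mul_of_one_le_right hγ hpow)
            (mul_le_mul_of_nonneg_left ih (by linarith))
      _ = γ * (k + 1 : ℕ) * (1 + θ) ^ (k + 1) := by push_cast; ring

theorem le_add_lyapunovCoeff_mul {m : ℕ} {S D N : ℕ → ℝ} {a e : ℝ} (hγ : 0 ≤ γ)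
    (hθ : 0 ≤ θ) (hD : ∀ t < m, 0 ≤ D t) (hN : ∀ t < m, 0 ≤ N t)
    (hS_step : ∀ t < m, S (t + 1) ≤ S t - a * N t + γ * D t)
    (hD_step : ∀ t < m, D (t + 1) ≤ (1 + θ) * D t + e * N t)
    (hcoeff : ∀ k < m, lyapunovCoeff γ θ k * e ≤ a) :
    ∀ j ≤ m, S j + lyapunovCoeff γ θ (m - j) * D j ≤ S 0 + lyapunovCoeff γ θ m * D 0
  | 0, _ => le_rfl
  | j + 1, hj => by
    have hc : lyapunovCoeff γ θ (m - j) = γ + (1 + θ) * lyapunovCoeff γ θ (m - (j + 1)) := by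
      rw [show m - j = m - (j + 1) + 1 by omega, lyapunovCoeff]
    have hc_nonneg := lyapunovCoeff_nonneg hγ hθ (m - (j + 1))
    have ih := le_add_lyapunovCoeff_mul hγ hθ hD hN hS_step hD_step hcoeff j (by omega)
    rw [hc] at ih
    nlinarith [hS_step j hj, mul_le_mul_of_nonneg_left (hD_step j hj) hc_nonneg,
      mul_le_mul_of_nonneg_right (hcoeff (m - (j + 1)) (by omega)) (hN j hj), hD j hj]

theorem one_add_pow_le_three {k : ℕ} (hθ : 0 ≤ θ) (hk : k * θ ≤ 1) : (1 + θ) ^ k ≤ 3 :=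
  calc (1 + θ) ^ k ≤ Real.exp θ ^ k := by
        gcongr; linarith [Real.add_one_le_exp θ]
    _ = Real.exp (k * θ) := (Real.exp_nat_mul θ k).symm
    _ ≤ Real.exp 1 := Real.exp_le_exp.2 hk
    _ ≤ 3 := by linarith [Real.exp_one_lt_d9]

theorem lyapunovCoeff_mul_le {L r η : ℝ} {m : ℕ} (hL : 0 < L) (hr : 1 ≤ r) (hm : (m : ℝ) ≤ r ^ 3)
    (hη : η = 1 / (4 * L * r ^ 2)) {k : ℕ} (hk : k ≤ m) :
    lyapunovCoeff (L ^ 3 * η ^ 2 / 2) (η * (L / r) + η ^ 2 * L ^ 2) k * (η / (L / r) + η ^ 2)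
      ≤ η - L * η ^ 2 / 2 := by
  have hr0 : 0 < r := by linarith
  have hk' : (k : ℝ) ≤ r ^ 3 := le_trans (by exact_mod_cast hk) hm
  have hθ : k * (η * (L / r) + η ^ 2 * L ^ 2) ≤ 1 := by
    have : r ^ 3 * (η * (L / r) + η ^ 2 * L ^ 2) ≤ 1 := by
      rw [hη]; field_simp; nlinarith
    exact le_trans (mul_le_mul_of_nonneg_right hk' (by rw [hη]; positivity)) this
  have hc : lyapunovCoeff (L ^ 3 * η ^ 2 / 2) (η * (L / r) + η ^ 2 * L ^ 2) k
      ≤ 3 * L / (32 * r) :=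
    calc _ ≤ L ^ 3 * η ^ 2 / 2 * k * 3 := by
          have hθ0 : 0 ≤ η * (L / r) + η ^ 2 * L ^ 2 := by rw [hη]; positivity
          refine (lyapunovCoeff_le (by positivity) hθ0 k).trans ?_
          gcongr
          exact one_add_pow_le_three hθ0 hθ
      _ ≤ L ^ 3 * η ^ 2 / 2 * r ^ 3 * 3 := by gcongr
      _ = 3 * L / (32 * r) := by rw [hη]; field_simp; ring
  calc _ ≤ 3 * L / (32 * r) * (η / (L / r) + η ^ 2) := by
        gcongr; rw [hη]; positivity
    _ ≤ η - L * η ^ 2 / 2 := by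
      rw [hη]; field_simp; nlinarith

end Lyapunov

section SVRG

variable {E : Type*} [NormedAddCommGroup E] [InnerProductSpace ℝ E] [CompleteSpace E] {n m : ℕ}

noncomputable def svrgDir (f : Fin n → E → ℝ) (F : E → ℝ) (x₀ : E) (i : Fin n) (x : E) : E :=
  gradient (f i) x - gradient (f i) x₀ + gradient F x₀

/-- `X σ t` is the inner iterate `x_t` driven by the index sequence `σ`; expectations over the
sampled indices are averages over all `σ`. -/
structure IsSVRGEpoch (f : Fin n → E → ℝ) (F : E → ℝ) (η : ℝ) (x₀ : E)
    (X : (Fin m → Fin n) → ℕ → E) : Prop where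
  start : ∀ σ, X σ 0 = x₀
  step : ∀ σ t (ht : t < m), X σ (t + 1) = X σ t - η • svrgDir f F x₀ (σ ⟨t, ht⟩) (X σ t)

variable {f : Fin n → E → ℝ} {F : E → ℝ} {L η : ℝ} {x₀ : E} {X : (Fin m → Fin n) → ℕ → E}

theorem sum_svrgDir (hmean : ∀ x, ∑ i, gradient (f i) x = (n : ℝ) • gradient F x) (x : E) :
    ∑ i, svrgDir f F x₀ i x = (n : ℝ) • gradient F x := by
  simp only [svrgDir, sum_add_distrib, sum_sub_distrib, hmean, sum_const, card_univ,
    Fintype.card_fin, ← Nat.cast_smul_eq_nsmul ℝ]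
  abel

theorem sum_norm_svrgDir_sq_le (hmean : ∀ x, ∑ i, gradient (f i) x = (n : ℝ) • gradient F x)
    (hlip : ∀ i a b, ‖gradient (f i) a - gradient (f i) b‖ ≤ L * ‖a - b‖) (x : E) :
    ∑ i, ‖svrgDir f F x₀ i x‖ ^ 2 ≤ n * (L ^ 2 * ‖x - x₀‖ ^ 2 + ‖gradient F x‖ ^ 2) := by
  set a := fun i => gradient (f i) x - gradient (f i) x₀
  set abar := gradient F x - gradient F x₀
  have hsum : ∑ i, (a i - abar) = 0 := by
    simp [a, abar, sum_sub_distrib, hmean, Nat.cast_smul_eq_nsmul]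
  have hvar := sum_norm_add_sq_of_sum_eq_zero hsum abar
  simp only [sub_add_cancel, Fintype.card_fin] at hvar
  have ha : ∀ i, ‖a i‖ ^ 2 ≤ L ^ 2 * ‖x - x₀‖ ^ 2 := fun i => by
    rw [← mul_pow]; exact pow_le_pow_left₀ (norm_nonneg _) (hlip i x x₀) 2
  calc ∑ i, ‖svrgDir f F x₀ i x‖ ^ 2 = ∑ i, ‖(a i - abar) + gradient F x‖ ^ 2 := by
        congr! 3; simp only [svrgDir, a, abar]; abel
    _ = ∑ i, ‖a i - abar‖ ^ 2 + n * ‖gradient F x‖ ^ 2 := by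
        rw [sum_norm_add_sq_of_sum_eq_zero hsum, Fintype.card_fin]
    _ ≤ ∑ i, ‖a i‖ ^ 2 + n * ‖gradient F x‖ ^ 2 := by nlinarith [sq_nonneg ‖abar‖]
    _ ≤ ∑ _i : Fin n, L ^ 2 * ‖x - x₀‖ ^ 2 + n * ‖gradient F x‖ ^ 2 := by
        gcongr with i; exact ha i
    _ = n * (L ^ 2 * ‖x - x₀‖ ^ 2 + ‖gradient F x‖ ^ 2) := by simp; ring

namespace IsSVRGEpoch

theorem apply_update (hX : IsSVRGEpoch f F η x₀ X) {p : Fin m} (σ : Fin m → Fin n) (a : Fin n)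
    {t : ℕ} (ht : t ≤ p) : X (Function.update σ p a) t = X σ t :=
  apply_update_eq_of_le (g := fun i x => x - η • svrgDir f F x₀ i x) (fun σ τ => by rw [hX.start, hX.start]) hX.step σ a t ht

theorem card_mul_sum_apply (hX : IsSVRGEpoch f F η x₀ X) {t : ℕ} (ht : t < m)
    (Ψ : E → Fin n → ℝ) :
    n * ∑ σ, Ψ (X σ t) (σ ⟨t, ht⟩) = ∑ σ, ∑ i, Ψ (X σ t) i := by
  simpa using Fintype.card_mul_sum_apply_self_eq_sum_sum ⟨t, ht⟩
    (G := fun σ i => Ψ (X σ t) i) fun σ a k => by rw [hX.apply_update σ a le_rfl]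

theorem sum_inner_svrgDir (hX : IsSVRGEpoch f F η x₀ X) (hn : 0 < n)
    (hmean : ∀ x, ∑ i, gradient (f i) x = (n : ℝ) • gradient F x) {t : ℕ} (ht : t < m)
    (w : E → E) :
    ∑ σ, ⟪w (X σ t), svrgDir f F x₀ (σ ⟨t, ht⟩) (X σ t)⟫ =
      ∑ σ, ⟪w (X σ t), gradient F (X σ t)⟫ := by
  have h := hX.card_mul_sum_apply ht fun x i => ⟪w x, svrgDir f F x₀ i x⟫
  simp only [← inner_sum, sum_svrgDir hmean, real_inner_smul_right, ← mul_sum] at h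
  exact mul_left_cancel₀ (by positivity) h

theorem sum_norm_svrgDir_sq_le (hX : IsSVRGEpoch f F η x₀ X) (hn : 0 < n)
    (hmean : ∀ x, ∑ i, gradient (f i) x = (n : ℝ) • gradient F x)
    (hlip : ∀ i a b, ‖gradient (f i) a - gradient (f i) b‖ ≤ L * ‖a - b‖) {t : ℕ} (ht : t < m) :
    ∑ σ, ‖svrgDir f F x₀ (σ ⟨t, ht⟩) (X σ t)‖ ^ 2 ≤
      L ^ 2 * ∑ σ, ‖X σ t - x₀‖ ^ 2 + ∑ σ, ‖gradient F (X σ t)‖ ^ 2 := by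
  refine le_of_mul_le_mul_left ?_ (Nat.cast_pos.2 hn : (0 : ℝ) < n)
  rw [hX.card_mul_sum_apply ht fun x i => ‖svrgDir f F x₀ i x‖ ^ 2, mul_add, mul_sum, mul_sum,
    mul_sum, ← sum_add_distrib]
  gcongr with σ
  exact (_root_.sum_norm_svrgDir_sq_le hmean hlip _).trans_eq (by ring)

theorem sum_apply_succ_le (hX : IsSVRGEpoch f F η x₀ X) (hn : 0 < n) (hL : 0 ≤ L)
    (hmean : ∀ x, ∑ i, gradient (f i) x = (n : ℝ) • gradient F x)
    (hlip : ∀ i a b, ‖gradient (f i) a - gradient (f i) b‖ ≤ L * ‖a - b‖)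
    (hF : Differentiable ℝ F) {t : ℕ} (ht : t < m) :
    ∑ σ, F (X σ (t + 1)) ≤ ∑ σ, F (X σ t) - (η - L * η ^ 2 / 2) * ∑ σ, ‖gradient F (X σ t)‖ ^ 2
      + L ^ 3 * η ^ 2 / 2 * ∑ σ, ‖X σ t - x₀‖ ^ 2 := by
  have : Nonempty (Fin n) := ⟨⟨0, hn⟩⟩
  have hF_lip := norm_sub_le_of_sum_eq_card_smul (by simpa using hmean) hlip
  have hdesc : ∀ σ, F (X σ (t + 1)) ≤ F (X σ t)
      - η * ⟪gradient F (X σ t), svrgDir f F x₀ (σ ⟨t, ht⟩) (X σ t)⟫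
      + L / 2 * η ^ 2 * ‖svrgDir f F x₀ (σ ⟨t, ht⟩) (X σ t)‖ ^ 2 := fun σ => by
    have h := le_add_inner_gradient_add_sq hF hF_lip (X σ t) (X σ (t + 1))
    rw [hX.step σ t ht] at h ⊢
    rw [sub_sub_cancel_left, inner_neg_right, real_inner_smul_right, norm_neg,
      norm_smul, mul_pow, Real.norm_eq_abs, sq_abs] at h
    linarith
  have hsum := sum_le_sum fun σ (_ : σ ∈ univ) => hdesc σ
  simp only [sum_add_distrib, sum_sub_distrib, ← mul_sum,
    hX.sum_inner_svrgDir hn hmean ht (gradient F), real_inner_self_eq_norm_sq] at hsum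
  nlinarith [mul_le_mul_of_nonneg_left (hX.sum_norm_svrgDir_sq_le hn hmean hlip ht)
    (by positivity : 0 ≤ L / 2 * η ^ 2)]

theorem sum_norm_sub_sq_succ_le (hX : IsSVRGEpoch f F η x₀ X) (hn : 0 < n) (hη : 0 ≤ η)
    (hmean : ∀ x, ∑ i, gradient (f i) x = (n : ℝ) • gradient F x)
    (hlip : ∀ i a b, ‖gradient (f i) a - gradient (f i) b‖ ≤ L * ‖a - b‖) {β : ℝ} (hβ : 0 < β)
    {t : ℕ} (ht : t < m) :
    ∑ σ, ‖X σ (t + 1) - x₀‖ ^ 2 ≤ (1 + (η * β + η ^ 2 * L ^ 2)) * ∑ σ, ‖X σ t - x₀‖ ^ 2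
      + (η / β + η ^ 2) * ∑ σ, ‖gradient F (X σ t)‖ ^ 2 := by
  have hexpand : ∀ σ, ‖X σ (t + 1) - x₀‖ ^ 2 = ‖X σ t - x₀‖ ^ 2
      - η * (2 * ⟪X σ t - x₀, svrgDir f F x₀ (σ ⟨t, ht⟩) (X σ t)⟫)
      + η ^ 2 * ‖svrgDir f F x₀ (σ ⟨t, ht⟩) (X σ t)‖ ^ 2 := fun σ => by
    rw [hX.step σ t ht, sub_right_comm, norm_sub_sq_real, real_inner_smul_right, norm_smul,
      mul_pow, Real.norm_eq_abs, sq_abs]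
    ring
  have hyoung := sum_le_sum fun σ (_ : σ ∈ univ) =>
    neg_two_mul_inner_le (X σ t - x₀) (gradient F (X σ t)) hβ
  simp only [sum_add_distrib, ← mul_sum, ← sum_div, sum_neg_distrib] at hyoung
  simp only [hexpand, sum_add_distrib, sum_sub_distrib, ← mul_sum,
    hX.sum_inner_svrgDir hn hmean ht (· - x₀)]
  have hvar := mul_le_mul_of_nonneg_left (hX.sum_norm_svrgDir_sq_le hn hmean hlip ht)
    (sq_nonneg η)
  have hcross := mul_le_mul_of_nonneg_left hyoung hη
  rw [div_eq_mul_inv] at hcross ⊢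
  nlinarith

theorem sum_apply_le (hX : IsSVRGEpoch f F η x₀ X) (hn : 0 < n) (hL : 0 < L)
    (hmean : ∀ x, ∑ i, gradient (f i) x = (n : ℝ) • gradient F x)
    (hlip : ∀ i a b, ‖gradient (f i) a - gradient (f i) b‖ ≤ L * ‖a - b‖)
    (hF : Differentiable ℝ F) {r : ℝ} (hr : 1 ≤ r) (hm : (m : ℝ) ≤ r ^ 3)
    (hη : η = 1 / (4 * L * r ^ 2)) {j : ℕ} (hj : j ≤ m) :
    ∑ σ, F (X σ j) ≤ n ^ m * F x₀ := by
  have hη0 : 0 ≤ η := by rw [hη]; positivity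
  have hβ : 0 < L / r := by positivity
  have hlyap := le_add_lyapunovCoeff_mul (S := fun t => ∑ σ, F (X σ t))
    (D := fun t => ∑ σ, ‖X σ t - x₀‖ ^ 2) (N := fun t => ∑ σ, ‖gradient F (X σ t)‖ ^ 2)
    (by positivity) (by positivity)
    (fun t _ => sum_nonneg fun σ _ => sq_nonneg ‖X σ t - x₀‖)
    (fun t _ => sum_nonneg fun σ _ => sq_nonneg ‖gradient F (X σ t)‖)
    (fun t ht => hX.sum_apply_succ_le hn hL.le hmean hlip hF ht)
    (fun t ht => hX.sum_norm_sub_sq_succ_le hn hη0 hmean hlip hβ ht)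
    (fun k hk => lyapunovCoeff_mul_le hL hr hm hη hk.le) j hj
  have hc := lyapunovCoeff_nonneg (γ := L ^ 3 * η ^ 2 / 2) (by positivity)
    (by positivity : 0 ≤ η * (L / r) + η ^ 2 * L ^ 2) (m - j)
  simp only [hX.start, sub_self, norm_zero, sum_const, card_univ, Fintype.card_fun,
    Fintype.card_fin, nsmul_eq_mul] at hlyap
  push_cast at hlyap
  nlinarith [sum_nonneg fun σ (_ : σ ∈ univ) => sq_nonneg ‖X σ j - x₀‖]

end IsSVRGEpoch

end SVRG

/-- Property G.1 in Lemma 1: within an SVRG epoch of length `m = n` with step size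
`η = 1/(4 L n^{2/3})`, the expected objective value at every inner iterate does not
exceed the value at the snapshot, the expectation being the average over all `n^n`
index sequences. -/
theorem stmt2 {d n : ℕ} (hn : 1 ≤ n) (L : ℝ) (hL : 0 < L)
    (f : Fin n → EuclideanSpace ℝ (Fin d) → ℝ)
    (hdiff : ∀ i, Differentiable ℝ (f i))
    (hlip : ∀ i, ∀ a b, ‖gradient (f i) a - gradient (f i) b‖ ≤ L * ‖a - b‖)
    (F : EuclideanSpace ℝ (Fin d) → ℝ)
    (hF : F = fun y => (1 / (n : ℝ)) * ∑ i, f i y)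
    (η : ℝ) (hη : η = 1 / (4 * L * (n : ℝ) ^ ((2 : ℝ) / 3)))
    (xtilde : EuclideanSpace ℝ (Fin d))
    (X : (Fin n → Fin n) → ℕ → EuclideanSpace ℝ (Fin d))
    (hX0 : ∀ σ, X σ 0 = xtilde)
    (hXstep : ∀ σ (t : ℕ) (ht : t < n),
      X σ (t + 1) = X σ t - η • (gradient (f (σ ⟨t, ht⟩)) (X σ t)
        - gradient (f (σ ⟨t, ht⟩)) xtilde + gradient F xtilde)) :
    ∀ j ≤ n, (1 / (n : ℝ) ^ n) * ∑ σ : Fin n → Fin n, F (X σ j) ≤ F xtilde := by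
  intro j hj
  have hn0 : (0 : ℝ) < n := by exact_mod_cast hn
  have hmean : ∀ x, ∑ i, gradient (f i) x = (n : ℝ) • gradient F x := fun x => by
    rw [hF, (hasGradientAt_const_mul_sum (fun i _ => (hdiff i).differentiableAt) _).gradient,
      smul_smul, mul_one_div_cancel hn0.ne', one_smul]
  have hFd : Differentiable ℝ F := hF ▸ by fun_prop
  set r := (n : ℝ) ^ ((1 : ℝ) / 3)
  have hr_pow : ∀ k : ℕ, r ^ k = (n : ℝ) ^ ((k : ℝ) / 3) := fun k => by
    rw [← Real.rpow_natCast, ← Real.rpow_mul hn0.le, one_div_mul_eq_div]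
  have hr : 1 ≤ r := Real.one_le_rpow (by exact_mod_cast hn) (by norm_num)
  have hm : (n : ℝ) ≤ r ^ 3 := by rw [hr_pow]; norm_num
  have hη' : η = 1 / (4 * L * r ^ 2) := by rw [hη, hr_pow]; norm_num
  have hsum := IsSVRGEpoch.sum_apply_le ⟨hX0, hXstep⟩ hn hL hmean hlip hFd hr hm hη' hj
  rw [one_div_mul_eq_div, div_le_iff₀ (by positivity), mul_comm]
  exact hsum
end

section
/- Let f : ℝ^d → ℝ be twice continuously differentiable with M-Lipschitz Hessian (M > 0), fix x ∈ ℝ^d and γ > 0 with ρ ∈ (0,1]. Let V be a random vector on a probability space taking values in the unit sphere of ℝ^d, and suppose that with probability at least ρ, ⟨V, ∇²f(x) V⟩ ≤ −γ/2. For a unit vector v define α(v) = |⟨v, ∇²f(x) v⟩|/M and u(v) = x − α(v)·v if ⟨∇f(x), v⟩ ≥ 0 and u(v) = x + α(v)·v otherwise, and let Y(v) be a point with f(Y(v)) = min(f(u(v)), f(x)). Then E[f(Y(V))] ≤ f(x) − (ρ/(24 M²)) γ³. -/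
/-!
Along a unit direction `v` of curvature `q = ⟨v, ∇²f(x) v⟩ ≤ -γ/2`, the cubic Taylor bound
`f(x + s v) ≤ f x + s ∇f(x)·v + s² q / 2 + M |s|³ / 6` with the step `|s| = -q/M` taken against
the gradient gives `f(x + s v) ≤ f x + q³/(3M²) ≤ f x - γ³/(24 M²)`. Since `Y` never increases
`f`, Markov's inequality applied to `f x - f(Y(V))` turns this into the bound in expectation.
-/

open Set MeasureTheory

theorem le_of_hasDerivAt_of_nonneg {a b : ℝ} {g g' : ℝ → ℝ} (hg : ∀ t, HasDerivAt g (g' t) t)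
    (hg' : ∀ t ∈ Ioo a b, 0 ≤ g' t) {t : ℝ} (ht : t ∈ Icc a b) : g a ≤ g t :=
  monotoneOn_of_hasDerivWithinAt_nonneg (convex_Icc a b)
    (fun s _ => (hg s).continuousAt.continuousWithinAt) (fun s _ => (hg s).hasDerivWithinAt)
    (by simpa only [interior_Icc] using hg') (left_mem_Icc.2 (ht.1.trans ht.2)) ht ht.1

theorem le_taylor_cubic_of_hasDerivAt {φ φ' φ'' : ℝ → ℝ} {K : ℝ}
    (hφ : ∀ t, HasDerivAt φ (φ' t) t) (hφ' : ∀ t, HasDerivAt φ' (φ'' t) t)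
    (hK : ∀ t ∈ Ioo (0 : ℝ) 1, φ'' t - φ'' 0 ≤ K * t) :
    φ 1 ≤ φ 0 + φ' 0 + φ'' 0 / 2 + K / 6 := by
  set ψ' : ℝ → ℝ := fun t => φ' 0 + t * φ'' 0 + K * t ^ 2 / 2 - φ' t
  have hψ' : ∀ t, HasDerivAt ψ' (φ'' 0 + K * t - φ'' t) t := fun t =>
    (((((hasDerivAt_id t).mul_const (φ'' 0)).const_add (φ' 0)).add
      (((hasDerivAt_pow 2 t).const_mul K).div_const 2)).sub (hφ' t)).congr_deriv
      (by simp only [Nat.cast_ofNat, Nat.add_one_sub_one]; ring)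
  have hψ'_nonneg : ∀ t ∈ Icc (0 : ℝ) 1, 0 ≤ ψ' t := fun t ht => by
    simpa [ψ'] using le_of_hasDerivAt_of_nonneg hψ'
      (fun s hs => by linarith [hK s hs]) ht
  have hψ : ∀ t, HasDerivAt
      (fun t => φ 0 + t * φ' 0 + t ^ 2 * φ'' 0 / 2 + K * t ^ 3 / 6 - φ t) (ψ' t) t := fun t =>
    ((((((hasDerivAt_id t).mul_const (φ' 0)).const_add (φ 0)).add
      (((hasDerivAt_pow 2 t).mul_const (φ'' 0)).div_const 2)).add
      (((hasDerivAt_pow 3 t).const_mul K).div_const 6)).sub (hφ t)).congr_deriv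
      (by simp only [ψ', Nat.cast_ofNat, Nat.add_one_sub_one]; ring)
  have := le_of_hasDerivAt_of_nonneg hψ (fun t ht => hψ'_nonneg t (Ioo_subset_Icc_self ht))
    (right_mem_Icc.2 zero_le_one)
  norm_num at this
  linarith

section LipschitzHessian

variable {E : Type*} [NormedAddCommGroup E] [NormedSpace ℝ E] {f : E → ℝ} {M : ℝ}

theorem le_taylor_cubic_of_lipschitz_hessian (hf : ContDiff ℝ 2 f)
    (hlip : ∀ a b, ‖fderiv ℝ (fderiv ℝ f) a - fderiv ℝ (fderiv ℝ f) b‖ ≤ M * ‖a - b‖)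
    (x h : E) :
    f (x + h) ≤ f x + fderiv ℝ f x h + fderiv ℝ (fderiv ℝ f) x h h / 2 + M * ‖h‖ ^ 3 / 6 := by
  have hline : ∀ t : ℝ, HasDerivAt (fun s : ℝ => x + s • h) h t := fun t => by
    simpa using ((hasDerivAt_id t).smul_const h).const_add x
  have hf' : Differentiable ℝ f := hf.differentiable (by norm_num)
  have hf'' : Differentiable ℝ (fderiv ℝ f) :=
    (hf.fderiv_right (m := 1) (by norm_num)).differentiable (by norm_num)
  have hcurv : ∀ t ∈ Ioo (0 : ℝ) 1, fderiv ℝ (fderiv ℝ f) (x + t • h) h h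
      - fderiv ℝ (fderiv ℝ f) x h h ≤ M * ‖h‖ ^ 3 * t := fun t ht => by
    set D := fderiv ℝ (fderiv ℝ f) (x + t • h) - fderiv ℝ (fderiv ℝ f) x
    calc D h h ≤ ‖D‖ * ‖h‖ * ‖h‖ := (Real.le_norm_self _).trans (D.le_opNorm₂ h h)
      _ ≤ M * ‖t • h‖ * ‖h‖ * ‖h‖ := by
        gcongr; simpa only [add_sub_cancel_left] using hlip (x + t • h) x
      _ = M * ‖h‖ ^ 3 * t := by rw [norm_smul, Real.norm_of_nonneg ht.1.le]; ring
  simpa using le_taylor_cubic_of_hasDerivAt (φ := fun t => f (x + t • h))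
    (φ' := fun t => fderiv ℝ f (x + t • h) h)
    (φ'' := fun t => fderiv ℝ (fderiv ℝ f) (x + t • h) h h) (K := M * ‖h‖ ^ 3)
    (fun t => (hf' _).hasFDerivAt.comp_hasDerivAt t (hline t))
    (fun t => by simpa using
      ((hf'' _).hasFDerivAt.comp_hasDerivAt t (hline t)).clm_apply (hasDerivAt_const t h))
    (fun t ht => by simpa using hcurv t ht)

theorem le_add_step_of_lipschitz_hessian (hM : 0 < M) (hf : ContDiff ℝ 2 f)
    (hlip : ∀ a b, ‖fderiv ℝ (fderiv ℝ f) a - fderiv ℝ (fderiv ℝ f) b‖ ≤ M * ‖a - b‖)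
    {x v : E} (hv : ‖v‖ = 1) {s : ℝ} (hs : |s| = -fderiv ℝ (fderiv ℝ f) x v v / M)
    (hslope : s * fderiv ℝ f x v ≤ 0) :
    f (x + s • v) ≤ f x + fderiv ℝ (fderiv ℝ f) x v v ^ 3 / (3 * M ^ 2) := by
  set q := fderiv ℝ (fderiv ℝ f) x v v
  have hsq : s ^ 2 = q ^ 2 / M ^ 2 := by rw [← sq_abs, hs, div_pow, neg_sq]
  calc f (x + s • v) ≤ f x + s * fderiv ℝ f x v + s ^ 2 * q / 2 + M * |s| ^ 3 / 6 := by
        have := le_taylor_cubic_of_lipschitz_hessian hf hlip x (s • v)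
        simp only [map_smul, smul_apply, smul_eq_mul, norm_smul, hv,
          Real.norm_eq_abs, mul_one] at this
        linarith
    _ ≤ f x + q ^ 2 / M ^ 2 * q / 2 + M * (-q / M) ^ 3 / 6 := by rw [hsq, hs]; linarith
    _ = f x + q ^ 3 / (3 * M ^ 2) := by field_simp; ring

end LipschitzHessian

theorem exists_ite_eq_add_smul {E : Type*} [AddCommGroup E] [Module ℝ E] (x v : E) {a : ℝ}
    (ha : 0 ≤ a) (r : ℝ) :
    ∃ s : ℝ, |s| = a ∧ s * r ≤ 0 ∧ (if 0 ≤ r then x - a • v else x + a • v) = x + s • v := by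
  by_cases hr : 0 ≤ r
  · exact ⟨-a, by simp [ha], by nlinarith, by simp [hr, sub_eq_add_neg]⟩
  · exact ⟨a, abs_of_nonneg ha, by nlinarith, by simp [hr]⟩

theorem integral_le_sub_mul_of_le_sub_on {Ω : Type*} [MeasurableSpace Ω] {μ : Measure Ω}
    [IsProbabilityMeasure μ] {X : Ω → ℝ} (hX : Integrable X μ) {a c ρ : ℝ} {S : Set Ω}
    (hc : 0 ≤ c) (hle : ∀ ω, X ω ≤ a) (hS : ∀ ω ∈ S, X ω ≤ a - c)
    (hρ : ENNReal.ofReal ρ ≤ μ S) :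
    ∫ ω, X ω ∂μ ≤ a - c * ρ := by
  have hST : S ⊆ {ω | c ≤ a - X ω} := fun ω hω => show c ≤ a - X ω by linarith [hS ω hω]
  have hρT : ρ ≤ μ.real {ω | c ≤ a - X ω} :=
    (ENNReal.ofReal_le_iff_le_toReal (measure_ne_top μ _)).1 (hρ.trans (measure_mono hST))
  have markov := mul_meas_ge_le_integral_of_nonneg
    (Filter.Eventually.of_forall fun ω => sub_nonneg.2 (hle ω)) ((integrable_const a).sub hX) c
  rw [integral_sub (integrable_const a) hX, integral_const, probReal_univ, one_smul] at markov
  nlinarith [mul_le_mul_of_nonneg_left hρT hc]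

open MeasureTheory in
theorem stmt4_general {d : ℕ} (f : EuclideanSpace ℝ (Fin d) → ℝ) (M : ℝ) (hM : 0 < M)
    (hf : ContDiff ℝ 2 f)
    (hlip : ∀ a b, ‖fderiv ℝ (fderiv ℝ f) a - fderiv ℝ (fderiv ℝ f) b‖ ≤ M * ‖a - b‖)
    (x : EuclideanSpace ℝ (Fin d)) (γ ρ : ℝ) (hγ : 0 < γ)
    {Ω : Type*} [MeasurableSpace Ω] (μ : Measure Ω) [IsProbabilityMeasure μ]
    (V : Ω → EuclideanSpace ℝ (Fin d)) (hV : ∀ ω, ‖V ω‖ = 1)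
    (hprob : ENNReal.ofReal ρ ≤ μ {ω | fderiv ℝ (fderiv ℝ f) x (V ω) (V ω) ≤ -γ / 2})
    (α : EuclideanSpace ℝ (Fin d) → ℝ)
    (hα : ∀ v, α v = |fderiv ℝ (fderiv ℝ f) x v v| / M)
    (u : EuclideanSpace ℝ (Fin d) → EuclideanSpace ℝ (Fin d))
    (hu : ∀ v, u v = if 0 ≤ (inner ℝ (gradient f x) v : ℝ) then x - α v • v else x + α v • v)
    (Y : EuclideanSpace ℝ (Fin d) → EuclideanSpace ℝ (Fin d))
    (hY : ∀ v, ‖v‖ = 1 → f (Y v) = min (f (u v)) (f x))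
    (hint : Integrable (fun ω => f (Y (V ω))) μ) :
    ∫ ω, f (Y (V ω)) ∂μ ≤ f x - ρ / (24 * M ^ 2) * γ ^ 3 := by
  have hdescent : ∀ v, ‖v‖ = 1 → fderiv ℝ (fderiv ℝ f) x v v ≤ -γ / 2 →
      f (Y v) ≤ f x - γ ^ 3 / (24 * M ^ 2) := fun v hv hq => by
    set q := fderiv ℝ (fderiv ℝ f) x v v
    have hαv : α v = -q / M := by rw [hα, abs_of_neg (by linarith)]
    obtain ⟨s, hs, hslope, hus⟩ :=
      exists_ite_eq_add_smul x v (hαv ▸ div_nonneg (by linarith) hM.le) (inner ℝ (gradient f x) v)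
    rw [inner_gradient_left] at hslope
    rw [hY v hv, hu, hus]
    calc min (f (x + s • v)) (f x) ≤ f (x + s • v) := min_le_left _ _
      _ ≤ f x + q ^ 3 / (3 * M ^ 2) :=
        le_add_step_of_lipschitz_hessian hM hf hlip hv (hs.trans hαv) hslope
      _ ≤ f x + (-γ / 2) ^ 3 / (3 * M ^ 2) := by
        have hcube : q ^ 3 ≤ (-γ / 2) ^ 3 := (Odd.strictMono_pow (by decide)).monotone hq
        gcongr
      _ = f x - γ ^ 3 / (24 * M ^ 2) := by ring
  have hle : ∀ ω, f (Y (V ω)) ≤ f x := fun ω => (hY _ (hV ω)).trans_le (min_le_right _ _)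
  have := integral_le_sub_mul_of_le_sub_on hint (by positivity) hle
    (fun ω hω => hdescent _ (hV ω) hω) hprob
  linarith [show ρ / (24 * M ^ 2) * γ ^ 3 = γ ^ 3 / (24 * M ^ 2) * ρ by ring]

open MeasureTheory in
/-- Lemma 2: HessianDescent, which with probability at least `ρ` finds a unit direction
of curvature at most `-γ/2`, decreases the objective in expectation by at least
`(ρ/(24 M²)) γ³`. -/
theorem stmt4 {d : ℕ} (f : EuclideanSpace ℝ (Fin d) → ℝ) (M : ℝ) (hM : 0 < M)
    (hf : ContDiff ℝ 2 f)
    (hlip : ∀ a b, ‖fderiv ℝ (fderiv ℝ f) a - fderiv ℝ (fderiv ℝ f) b‖ ≤ M * ‖a - b‖)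
    (x : EuclideanSpace ℝ (Fin d)) (γ ρ : ℝ) (hγ : 0 < γ) (hρ : 0 < ρ) (hρ1 : ρ ≤ 1)
    {Ω : Type*} [MeasurableSpace Ω] (μ : Measure Ω) [IsProbabilityMeasure μ]
    (V : Ω → EuclideanSpace ℝ (Fin d)) (hV : ∀ ω, ‖V ω‖ = 1)
    (hprob : ENNReal.ofReal ρ ≤ μ {ω | fderiv ℝ (fderiv ℝ f) x (V ω) (V ω) ≤ -γ / 2})
    (α : EuclideanSpace ℝ (Fin d) → ℝ)
    (hα : ∀ v, α v = |fderiv ℝ (fderiv ℝ f) x v v| / M)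
    (u : EuclideanSpace ℝ (Fin d) → EuclideanSpace ℝ (Fin d))
    (hu : ∀ v, u v = if 0 ≤ (inner ℝ (gradient f x) v : ℝ) then x - α v • v else x + α v • v)
    (Y : EuclideanSpace ℝ (Fin d) → EuclideanSpace ℝ (Fin d))
    (hY : ∀ v, ‖v‖ = 1 → f (Y v) = min (f (u v)) (f x))
    (hint : Integrable (fun ω => f (Y (V ω))) μ) :
    ∫ ω, f (Y (V ω)) ∂μ ≤ f x - ρ / (24 * M ^ 2) * γ ^ 3 :=
  stmt4_general f M hM hf hlip x γ ρ hγ μ V hV hprob α hα u hu Y hY hint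
end

section
/- Let f : ℝ^d → ℝ be twice continuously differentiable with M-Lipschitz Hessian (M > 0), let x ∈ ℝ^d, γ > 0, and let v ∈ ℝ^d be a unit vector with ⟨v, ∇²f(x) v⟩ ≤ −γ/2. Set α = |⟨v, ∇²f(x) v⟩|/M and u = x − α·v if ⟨∇f(x), v⟩ ≥ 0, u = x + α·v otherwise. Then f(u) ≤ f(x) − (1/(3M²)) |⟨v, ∇²f(x) v⟩|³ ≤ f(x) − γ³/(24 M²). -/
/-!
Along the line `t ↦ f (x + t • h)` the second derivative is `D²f(x + t h) h h`, which by the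
Lipschitz bound exceeds `D²f(x) h h` by at most `M ‖h‖³ t`; integrating twice gives the cubic
upper model `f (x + h) ≤ f x + Df(x) h + D²f(x) h h / 2 + M ‖h‖³ / 6`. For `h = s • v` with
`s` of the sign opposite to `Df(x) v` the linear term is nonpositive, and the step length
`|s| = |λ| / M`, `λ = D²f(x) v v ≤ 0`, minimizes the remaining model `s² λ / 2 + M |s|³ / 6`,
whose minimum is `-|λ|³ / (3 M²)`. Finally `|λ| ≥ γ / 2` gives the bound `γ³ / (24 M²)`.
-/

open Set

theorem le_of_hasDerivAt_le_of_le {a b a' b' : ℝ → ℝ} {T : ℝ} (hT : 0 ≤ T)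
    (ha : ∀ t, HasDerivAt a (a' t) t) (hb : ∀ t, HasDerivAt b (b' t) t)
    (h0 : a 0 ≤ b 0) (hderiv : ∀ t ∈ Icc 0 T, a' t ≤ b' t) : a T ≤ b T :=
  image_le_of_deriv_right_le_deriv_boundary
    (fun t _ => (ha t).continuousAt.continuousWithinAt) (fun t _ => (ha t).hasDerivWithinAt) h0
    (fun t _ => (hb t).continuousAt.continuousWithinAt) (fun t _ => (hb t).hasDerivWithinAt)
    (fun t ht => hderiv t (Ico_subset_Icc_self ht)) (right_mem_Icc.2 hT)

theorem le_taylor_two_of_deriv2_le {g g' g'' : ℝ → ℝ} {K T : ℝ} (hT : 0 ≤ T)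
    (hg : ∀ t, HasDerivAt g (g' t) t) (hg' : ∀ t, HasDerivAt g' (g'' t) t)
    (hg'' : ∀ t ∈ Icc 0 T, g'' t ≤ g'' 0 + K * t) :
    g T ≤ g 0 + g' 0 * T + g'' 0 * T ^ 2 / 2 + K * T ^ 3 / 6 := by
  have hP (t : ℝ) : HasDerivAt (fun t => g 0 + g' 0 * t + g'' 0 * t ^ 2 / 2 + K * t ^ 3 / 6)
      (g' 0 + g'' 0 * t + K * t ^ 2 / 2) t := by
    refine ((((hasDerivAt_id t).const_mul (g' 0)).const_add (g 0)).add
      (((hasDerivAt_pow 2 t).const_mul (g'' 0)).div_const 2)).add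
      (((hasDerivAt_pow 3 t).const_mul K).div_const 6) |>.congr_deriv ?_
    norm_num
    ring
  have hP' (t : ℝ) : HasDerivAt (fun t => g' 0 + g'' 0 * t + K * t ^ 2 / 2) (g'' 0 + K * t) t := by
    refine (((hasDerivAt_id t).const_mul (g'' 0)).const_add (g' 0)).add
      (((hasDerivAt_pow 2 t).const_mul K).div_const 2) |>.congr_deriv ?_
    norm_num
    ring
  refine le_of_hasDerivAt_le_of_le hT hg hP (by simp) fun t ht => ?_
  exact le_of_hasDerivAt_le_of_le ht.1 hg' hP' (by simp)
    fun s hs => hg'' s ⟨hs.1, hs.2.trans ht.2⟩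

theorem le_taylor_two_of_lipschitz_hessian {E : Type*} [NormedAddCommGroup E] [NormedSpace ℝ E]
    {f : E → ℝ} {M : ℝ} (hf : ContDiff ℝ 2 f)
    (hlip : ∀ a b, ‖fderiv ℝ (fderiv ℝ f) a - fderiv ℝ (fderiv ℝ f) b‖ ≤ M * ‖a - b‖)
    (x h : E) :
    f (x + h) ≤ f x + fderiv ℝ f x h + fderiv ℝ (fderiv ℝ f) x h h / 2 + M / 6 * ‖h‖ ^ 3 := by
  have hline (t : ℝ) : HasDerivAt (fun t : ℝ => x + t • h) h t := by
    simpa using ((hasDerivAt_id t).smul_const h).const_add x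
  have hg (t : ℝ) : HasDerivAt (fun t => f (x + t • h)) (fderiv ℝ f (x + t • h) h) t :=
    ((hf.differentiable two_ne_zero) _).hasFDerivAt.comp_hasDerivAt t (hline t)
  have hg' (t : ℝ) : HasDerivAt (fun t => fderiv ℝ f (x + t • h) h)
      (fderiv ℝ (fderiv ℝ f) (x + t • h) h h) t := by
    have hDf := (hf.fderiv_right (m := 1) le_rfl).differentiable one_ne_zero
    simpa using ((hDf _).hasFDerivAt.comp_hasDerivAt t (hline t)).clm_apply (hasDerivAt_const t h)
  have hcurv : ∀ t ∈ Icc (0 : ℝ) 1, fderiv ℝ (fderiv ℝ f) (x + t • h) h h ≤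
      fderiv ℝ (fderiv ℝ f) (x + (0 : ℝ) • h) h h + M * ‖h‖ ^ 3 * t := by
    intro t ht
    rw [zero_smul, add_zero, ← sub_le_iff_le_add', ← sub_apply, ← sub_apply]
    calc _ ≤ ‖fderiv ℝ (fderiv ℝ f) (x + t • h) - fderiv ℝ (fderiv ℝ f) x‖ * ‖h‖ * ‖h‖ :=
          (Real.le_norm_self _).trans (ContinuousLinearMap.le_opNorm₂ _ h h)
      _ ≤ M * ‖(x + t • h) - x‖ * ‖h‖ * ‖h‖ := by gcongr; exact hlip _ _
      _ = M * ‖h‖ ^ 3 * t := by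
        rw [add_sub_cancel_left, norm_smul, Real.norm_of_nonneg ht.1]; ring
  have := le_taylor_two_of_deriv2_le zero_le_one hg hg' hcurv
  simp only [zero_smul, one_smul, add_zero, mul_one, one_pow] at this
  linarith

theorem le_sub_of_negative_curvature_step {E : Type*} [NormedAddCommGroup E] [NormedSpace ℝ E]
    {f : E → ℝ} {M : ℝ} (hM : 0 < M) (hf : ContDiff ℝ 2 f)
    (hlip : ∀ a b, ‖fderiv ℝ (fderiv ℝ f) a - fderiv ℝ (fderiv ℝ f) b‖ ≤ M * ‖a - b‖)
    {x v : E} (hv : ‖v‖ = 1) (hcurv : fderiv ℝ (fderiv ℝ f) x v v ≤ 0) {s : ℝ}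
    (hs : |s| = |fderiv ℝ (fderiv ℝ f) x v v| / M) (hslope : s * fderiv ℝ f x v ≤ 0) :
    f (x + s • v) ≤ f x - 1 / (3 * M ^ 2) * |fderiv ℝ (fderiv ℝ f) x v v| ^ 3 := by
  set c := fderiv ℝ (fderiv ℝ f) x v v
  have htaylor := le_taylor_two_of_lipschitz_hessian hf hlip x (s • v)
  simp only [map_smul, smul_apply, smul_eq_mul, norm_smul, Real.norm_eq_abs,
    hv, mul_one] at htaylor
  have hs2 : s * (s * c) = -(|c| / M) ^ 2 * |c| := by
    rw [← mul_assoc, ← sq, ← sq_abs, hs, abs_of_nonpos hcurv]; ring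
  calc f (x + s • v) ≤ f x + s * fderiv ℝ f x v + s * (s * c) / 2 + M / 6 * |s| ^ 3 := htaylor
    _ ≤ f x - (|c| / M) ^ 2 * |c| / 2 + M / 6 * (|c| / M) ^ 3 := by rw [hs2, hs]; linarith
    _ = f x - 1 / (3 * M ^ 2) * |c| ^ 3 := by field_simp; ring

/-- Eq. (19) in the proof of Lemma 2: a single HessianDescent step along a unit
direction of curvature at most `-γ/2` decreases the objective by at least
`γ³/(24 M²)`. -/
theorem stmt5 {d : ℕ} (f : EuclideanSpace ℝ (Fin d) → ℝ) (M : ℝ) (hM : 0 < M)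
    (hf : ContDiff ℝ 2 f)
    (hlip : ∀ a b, ‖fderiv ℝ (fderiv ℝ f) a - fderiv ℝ (fderiv ℝ f) b‖ ≤ M * ‖a - b‖)
    (x v : EuclideanSpace ℝ (Fin d)) (γ : ℝ) (hγ : 0 < γ) (hv : ‖v‖ = 1)
    (hneg : fderiv ℝ (fderiv ℝ f) x v v ≤ -γ / 2)
    (α : ℝ) (hα : α = |fderiv ℝ (fderiv ℝ f) x v v| / M)
    (u : EuclideanSpace ℝ (Fin d))
    (hu : u = if 0 ≤ (inner ℝ (gradient f x) v : ℝ) then x - α • v else x + α • v) :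
    f u ≤ f x - 1 / (3 * M ^ 2) * |fderiv ℝ (fderiv ℝ f) x v v| ^ 3 ∧
      f x - 1 / (3 * M ^ 2) * |fderiv ℝ (fderiv ℝ f) x v v| ^ 3 ≤ f x - γ ^ 3 / (24 * M ^ 2) := by
  set c := fderiv ℝ (fderiv ℝ f) x v v
  have hα0 : 0 ≤ α := hα ▸ by positivity
  obtain ⟨s, rfl, hs, hslope⟩ : ∃ s : ℝ, u = x + s • v ∧ |s| = α ∧ s * fderiv ℝ f x v ≤ 0 := by
    rw [inner_gradient_left] at hu
    split_ifs at hu with hsign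
    · exact ⟨-α, by rw [hu, neg_smul, sub_eq_add_neg], by rw [abs_neg, abs_of_nonneg hα0],
        by nlinarith⟩
    · exact ⟨α, hu, abs_of_nonneg hα0, by nlinarith⟩
  refine ⟨le_sub_of_negative_curvature_step hM hf hlip hv (by linarith) (hs.trans hα) hslope, ?_⟩
  have hγc : γ / 2 ≤ |c| := by rw [abs_of_nonpos (by linarith)]; linarith
  have hcube : (γ / 2) ^ 3 ≤ |c| ^ 3 := pow_le_pow_left₀ (by positivity) hγc 3
  rw [sub_le_sub_iff_left, div_le_iff₀ (by positivity)]
  field_simp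
  linarith
end

section
/- Let f : ℝ^d → ℝ be twice continuously differentiable with M-Lipschitz Hessian (M ≥ 0), fix x ∈ ℝ^d, and define the cubic model m_x(z) = f(x) + ⟨∇f(x), z − x⟩ + (1/2)⟨z − x, ∇²f(x)(z − x)⟩ + (M/6)‖z − x‖³. If y ∈ ℝ^d is a global minimizer of m_x, then f(y) ≤ m_x(y) ≤ m_x(x) = f(x); in particular the cubic regularization step never increases the objective value: f(y) ≤ f(x). -/
/-!
Along the segment `t ↦ x + t • (y - x)`, the Lipschitz bound on the Hessian makes the second
derivative of `f` grow at most like `M ‖y - x‖³ t`. Comparing with the one-variable cubic having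
this second derivative and the same value and slope at `t = 0` gives `f y ≤ m_x y`; minimality of
`y` and `m_x x = f x` finish the argument.
-/

open Set

lemma le_of_hasDerivAt_of_hasDerivAt_le {g g' g'' h h' h'' : ℝ → ℝ} {a b : ℝ} (hab : a ≤ b)
    (hg : ∀ t, HasDerivAt g (g' t) t) (hg' : ∀ t, HasDerivAt g' (g'' t) t)
    (hh : ∀ t, HasDerivAt h (h' t) t) (hh' : ∀ t, HasDerivAt h' (h'' t) t)
    (ha : g a ≤ h a) (ha' : g' a ≤ h' a) (hle : ∀ t ∈ Ioo a b, g'' t ≤ h'' t) :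
    g b ≤ h b := by
  have antitone_of_deriv {e e' : ℝ → ℝ} (he : ∀ t, HasDerivAt e (e' t) t)
      (hneg : ∀ t ∈ Ioo a b, e' t ≤ 0) : AntitoneOn e (Icc a b) :=
    antitoneOn_of_hasDerivWithinAt_nonpos (convex_Icc a b)
      (fun t _ ↦ (he t).continuousAt.continuousWithinAt)
      (fun t _ ↦ (he t).hasDerivWithinAt) (by simpa only [interior_Icc] using hneg)
  have hslope : AntitoneOn (g' - h') (Icc a b) :=
    antitone_of_deriv (fun t ↦ (hg' t).sub (hh' t)) fun t ht ↦ sub_nonpos.2 (hle t ht)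
  have hval : AntitoneOn (g - h) (Icc a b) := by
    refine antitone_of_deriv (fun t ↦ (hg t).sub (hh t)) fun t ht ↦ ?_
    have := hslope (left_mem_Icc.2 hab) (Ioo_subset_Icc_self ht) ht.1.le
    simp only [Pi.sub_apply] at this
    linarith
  have := hval (left_mem_Icc.2 hab) (right_mem_Icc.2 hab) hab
  simp only [Pi.sub_apply] at this
  linarith

lemma hasDerivAt_cubic (a b c e t : ℝ) :
    HasDerivAt (fun t : ℝ ↦ a + b * t + c * t ^ 2 + e * t ^ 3) (b + 2 * c * t + 3 * e * t ^ 2) t :=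
  ((((hasDerivAt_id' t).const_mul b).const_add a).fun_add
    ((hasDerivAt_pow 2 t).const_mul c) |>.fun_add ((hasDerivAt_pow 3 t).const_mul e)).congr_deriv
    (by norm_num; ring)

lemma le_taylor_two_add_cubic {φ φ' φ'' : ℝ → ℝ} {L : ℝ}
    (hφ : ∀ t, HasDerivAt φ (φ' t) t) (hφ' : ∀ t, HasDerivAt φ' (φ'' t) t)
    (hL : ∀ t ∈ Ioo (0 : ℝ) 1, φ'' t - φ'' 0 ≤ L * t) :
    φ 1 ≤ φ 0 + φ' 0 + 1 / 2 * φ'' 0 + L / 6 := by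
  have hcubic (t : ℝ) := hasDerivAt_cubic (φ 0) (φ' 0) (φ'' 0 / 2) (L / 6) t
  have hquad (t : ℝ) := hasDerivAt_cubic (φ' 0) (φ'' 0) (L / 2) 0 t
  have := le_of_hasDerivAt_of_hasDerivAt_le zero_le_one hφ hφ'
    (fun t ↦ (hcubic t).congr_deriv (by ring)) hquad (by simp) (by simp)
    (fun t ht ↦ by linarith [hL t ht])
  norm_num at this
  linarith

variable {E : Type*} [NormedAddCommGroup E] [NormedSpace ℝ E]

lemma hessian_apply_sub_le {f : E → ℝ} {M : ℝ} {x : E}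
    (hlip : ∀ a, ‖fderiv ℝ (fderiv ℝ f) a - fderiv ℝ (fderiv ℝ f) x‖ ≤ M * ‖a - x‖)
    (v : E) {t : ℝ} (ht : 0 ≤ t) :
    fderiv ℝ (fderiv ℝ f) (x + t • v) v v - fderiv ℝ (fderiv ℝ f) x v v ≤ M * ‖v‖ ^ 3 * t := by
  set A := fderiv ℝ (fderiv ℝ f)
  calc A (x + t • v) v v - A x v v = (A (x + t • v) - A x) v v := rfl
    _ ≤ ‖(A (x + t • v) - A x) v v‖ := le_abs_self _
    _ ≤ ‖A (x + t • v) - A x‖ * ‖v‖ * ‖v‖ := (A (x + t • v) - A x).le_opNorm₂ v v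
    _ ≤ M * (t * ‖v‖) * ‖v‖ * ‖v‖ := by
      gcongr
      simpa [norm_smul, abs_of_nonneg ht] using hlip (x + t • v)
    _ = M * ‖v‖ ^ 3 * t := by ring

theorem le_taylor_two_add_cubic_of_hessian_lipschitz {f : E → ℝ} {M : ℝ} {x : E}
    (hf : Differentiable ℝ f) (hf' : Differentiable ℝ (fderiv ℝ f))
    (hlip : ∀ a, ‖fderiv ℝ (fderiv ℝ f) a - fderiv ℝ (fderiv ℝ f) x‖ ≤ M * ‖a - x‖) (y : E) :
    f y ≤ f x + fderiv ℝ f x (y - x) + 1 / 2 * fderiv ℝ (fderiv ℝ f) x (y - x) (y - x)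
      + M / 6 * ‖y - x‖ ^ 3 := by
  set v := y - x
  have hline (t : ℝ) : HasDerivAt (fun t : ℝ ↦ x + t • v) v t := by
    simpa using ((hasDerivAt_id t).smul_const v).const_add x
  have hφ (t : ℝ) : HasDerivAt (fun t ↦ f (x + t • v)) (fderiv ℝ f (x + t • v) v) t :=
    (hf _).hasFDerivAt.comp_hasDerivAt t (hline t)
  have hφ' (t : ℝ) : HasDerivAt (fun t ↦ fderiv ℝ f (x + t • v) v)
      (fderiv ℝ (fderiv ℝ f) (x + t • v) v v) t := by
    simpa using ((hf' _).hasFDerivAt.comp_hasDerivAt t (hline t)).clm_apply (hasDerivAt_const t v)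
  have := le_taylor_two_add_cubic hφ hφ' fun t ht ↦ by
    simpa using hessian_apply_sub_le hlip v ht.1.le
  simp only [zero_smul, add_zero, one_smul, add_sub_cancel, v] at this
  linarith

theorem stmt7_general {d : ℕ} (f : EuclideanSpace ℝ (Fin d) → ℝ) (M : ℝ)
    (hf : ContDiff ℝ 2 f)
    (hlip : ∀ a b, ‖fderiv ℝ (fderiv ℝ f) a - fderiv ℝ (fderiv ℝ f) b‖ ≤ M * ‖a - b‖)
    (x : EuclideanSpace ℝ (Fin d))
    (mx : EuclideanSpace ℝ (Fin d) → ℝ)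
    (hmx : ∀ z, mx z = f x + (inner ℝ (gradient f x) (z - x) : ℝ)
      + (1 / 2) * fderiv ℝ (fderiv ℝ f) x (z - x) (z - x) + (M / 6) * ‖z - x‖ ^ 3)
    (y : EuclideanSpace ℝ (Fin d)) (hy : ∀ z, mx y ≤ mx z) :
    f y ≤ mx y ∧ mx y ≤ mx x ∧ mx x = f x ∧ f y ≤ f x := by
  have hfy : f y ≤ mx y := by
    rw [hmx, inner_gradient_left]
    exact le_taylor_two_add_cubic_of_hessian_lipschitz (hf.differentiable (by norm_num))
      ((hf.fderiv_right (m := 1) (by norm_num)).differentiable (by norm_num)) (hlip · x) y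
  have hmxx : mx x = f x := by simp [hmx]
  exact ⟨hfy, hy x, hmxx, hfy.trans ((hy x).trans hmxx.le)⟩

/-- Descent property of the CubicDescent subroutine (condition H.1): a global minimizer
`y` of the cubic-regularized model at `x` never increases the objective. -/
theorem stmt7 {d : ℕ} (f : EuclideanSpace ℝ (Fin d) → ℝ) (M : ℝ) (hM : 0 ≤ M)
    (hf : ContDiff ℝ 2 f)
    (hlip : ∀ a b, ‖fderiv ℝ (fderiv ℝ f) a - fderiv ℝ (fderiv ℝ f) b‖ ≤ M * ‖a - b‖)
    (x : EuclideanSpace ℝ (Fin d))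
    (mx : EuclideanSpace ℝ (Fin d) → ℝ)
    (hmx : ∀ z, mx z = f x + (inner ℝ (gradient f x) (z - x) : ℝ)
      + (1 / 2) * fderiv ℝ (fderiv ℝ f) x (z - x) (z - x) + (M / 6) * ‖z - x‖ ^ 3)
    (y : EuclideanSpace ℝ (Fin d)) (hy : ∀ z, mx y ≤ mx z) :
    f y ≤ mx y ∧ mx y ≤ mx x ∧ mx x = f x ∧ f y ≤ f x :=
  stmt7_general f M hf hlip x mx hmx y hy
end

section
/- Let n ≥ 1 and let f_1, ..., f_n : ℝ^d → ℝ each be differentiable with L-Lipschitz gradient (L ≥ 0), and let f = (1/n)∑_{i=1}^n f_i. Then for all x, x̃ ∈ ℝ^d, (1/n) ∑_{i=1}^n ‖∇f_i(x) − ∇f_i(x̃) + ∇f(x̃)‖² ≤ 2‖∇f(x)‖² + 2L²‖x − x̃‖². -/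
/-!
Write `aᵢ = ∇fᵢ(x) − ∇fᵢ(x̃)` and `ā` for their average, so that `ā = ∇f(x) − ∇f(x̃)` and
`vᵢ = (aᵢ − ā) + ∇f(x)`. Since the `aᵢ − ā` sum to zero, the cross terms cancel and the mean of
`‖vᵢ‖²` is the variance of the `aᵢ` plus `‖∇f(x)‖²`. The variance is at most the second moment
of the `aᵢ`, which smoothness bounds by `L²‖x − x̃‖²`. This gives the sharper bound
`‖∇f(x)‖² + L²‖x − x̃‖²`.
-/

open Finset

section Average

variable {ι E : Type*} [Fintype ι] [NormedAddCommGroup E] [InnerProductSpace ℝ E]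

noncomputable def avg (w : ι → E) : E := (Fintype.card ι : ℝ)⁻¹ • ∑ i, w i

lemma avg_sub (w v : ι → E) : avg (fun i => w i - v i) = avg w - avg v := by
  simp only [avg, sum_sub_distrib, smul_sub]

lemma sum_sub_avg_eq_zero (w : ι → E) : ∑ i, (w i - avg w) = 0 := by
  rcases isEmpty_or_nonempty ι with hι | hι
  · simp
  · have hcard : (Fintype.card ι : ℝ) ≠ 0 := by exact_mod_cast Fintype.card_ne_zero
    rw [sum_sub_distrib, sum_const, card_univ, avg, ← Nat.cast_smul_eq_nsmul ℝ, smul_smul,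
      mul_inv_cancel₀ hcard, one_smul, sub_self]

lemma sum_norm_sub_sq_eq (w : ι → E) (c : E) :
    ∑ i, ‖w i - c‖ ^ 2 = ∑ i, ‖w i - avg w‖ ^ 2 + Fintype.card ι * ‖avg w - c‖ ^ 2 := by
  have hcross : ∑ i, inner ℝ (w i - avg w) (avg w - c) = 0 := by
    rw [← sum_inner, sum_sub_avg_eq_zero, inner_zero_left]
  calc ∑ i, ‖w i - c‖ ^ 2
      = ∑ i, (‖w i - avg w‖ ^ 2 + 2 * inner ℝ (w i - avg w) (avg w - c) + ‖avg w - c‖ ^ 2) := by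
        refine sum_congr rfl fun i _ => ?_
        rw [← norm_add_sq_real, sub_add_sub_cancel]
    _ = ∑ i, ‖w i - avg w‖ ^ 2 + Fintype.card ι * ‖avg w - c‖ ^ 2 := by
        rw [sum_add_distrib, sum_add_distrib, ← mul_sum, hcross, sum_const, card_univ,
          nsmul_eq_mul]
        ring

lemma sum_norm_sub_avg_sq_le (w : ι → E) : ∑ i, ‖w i - avg w‖ ^ 2 ≤ ∑ i, ‖w i‖ ^ 2 := by
  have h := sum_norm_sub_sq_eq w 0
  simp only [sub_zero] at h
  rw [h]
  exact le_add_of_nonneg_right (by positivity)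

end Average

section Gradient

variable {ι E : Type*} [Fintype ι] [NormedAddCommGroup E] [InnerProductSpace ℝ E] [CompleteSpace E]

lemma gradient_const_mul_sum (f : ι → E → ℝ) (hf : ∀ i, Differentiable ℝ (f i)) (c : ℝ) (y : E) :
    gradient (fun z => c * ∑ i, f i z) y = c • ∑ i, gradient (f i) y := by
  have hsum : DifferentiableAt ℝ (fun z => ∑ i, f i z) y :=
    DifferentiableAt.fun_sum fun i _ => hf i y
  have hfderiv : fderiv ℝ (fun z => c * ∑ i, f i z) y = c • ∑ i, fderiv ℝ (f i) y := by
    rw [fderiv_const_mul hsum, fderiv_fun_sum fun i _ => hf i y]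
  simp only [gradient, hfderiv, map_smul, map_sum]

lemma gradient_avg (f : ι → E → ℝ) (hf : ∀ i, Differentiable ℝ (f i)) (y : E) :
    gradient (fun z => (Fintype.card ι : ℝ)⁻¹ * ∑ i, f i z) y = avg fun i => gradient (f i) y :=
  gradient_const_mul_sum f hf _ y

lemma avg_norm_sq_svrg_le (L : ℝ) (f : ι → E → ℝ) (hdiff : ∀ i, Differentiable ℝ (f i))
    (hlip : ∀ i, ∀ a b, ‖gradient (f i) a - gradient (f i) b‖ ≤ L * ‖a - b‖) (x xtilde : E) :
    let F := fun y => (Fintype.card ι : ℝ)⁻¹ * ∑ i, f i y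
    (Fintype.card ι : ℝ)⁻¹ * ∑ i, ‖gradient (f i) x - gradient (f i) xtilde + gradient F xtilde‖ ^ 2
      ≤ ‖gradient F x‖ ^ 2 + L ^ 2 * ‖x - xtilde‖ ^ 2 := by
  intro F
  set n : ℝ := (Fintype.card ι : ℝ)
  set a : ι → E := fun i => gradient (f i) x - gradient (f i) xtilde
  have havg : avg a = gradient F x - gradient F xtilde := by
    simp only [F, a, gradient_avg f hdiff, avg_sub]
  have hv : ∀ i, gradient (f i) x - gradient (f i) xtilde + gradient F xtilde
      = a i - (avg a - gradient F x) := by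
    intro i
    rw [havg]
    simp only [a]
    abel
  have hsmooth : ∑ i, ‖a i‖ ^ 2 ≤ n * (L ^ 2 * ‖x - xtilde‖ ^ 2) := by
    calc ∑ i, ‖a i‖ ^ 2 ≤ ∑ _i : ι, (L * ‖x - xtilde‖) ^ 2 :=
          sum_le_sum fun i _ => pow_le_pow_left₀ (norm_nonneg _) (hlip i x xtilde) 2
      _ = n * (L ^ 2 * ‖x - xtilde‖ ^ 2) := by
          rw [sum_const, card_univ, nsmul_eq_mul, mul_pow]
  have hdecomp : ∑ i, ‖a i - (avg a - gradient F x)‖ ^ 2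
      = ∑ i, ‖a i - avg a‖ ^ 2 + n * ‖gradient F x‖ ^ 2 := by
    rw [sum_norm_sub_sq_eq, sub_sub_cancel]
  have hn : n⁻¹ * n ≤ 1 := inv_mul_le_one_of_le₀ le_rfl (Nat.cast_nonneg _)
  calc n⁻¹ * ∑ i, ‖gradient (f i) x - gradient (f i) xtilde + gradient F xtilde‖ ^ 2
      = n⁻¹ * (∑ i, ‖a i - avg a‖ ^ 2 + n * ‖gradient F x‖ ^ 2) := by
        simp only [hv, hdecomp]
    _ ≤ n⁻¹ * (n * (L ^ 2 * ‖x - xtilde‖ ^ 2) + n * ‖gradient F x‖ ^ 2) := by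
        gcongr
        exact (sum_norm_sub_avg_sq_le a).trans hsmooth
    _ = n⁻¹ * n * (‖gradient F x‖ ^ 2 + L ^ 2 * ‖x - xtilde‖ ^ 2) := by ring
    _ ≤ ‖gradient F x‖ ^ 2 + L ^ 2 * ‖x - xtilde‖ ^ 2 :=
        mul_le_of_le_one_left (by positivity) hn

end Gradient

theorem stmt8_general {d n : ℕ} (L : ℝ)
    (f : Fin n → EuclideanSpace ℝ (Fin d) → ℝ)
    (hdiff : ∀ i, Differentiable ℝ (f i))
    (hlip : ∀ i, ∀ a b, ‖gradient (f i) a - gradient (f i) b‖ ≤ L * ‖a - b‖)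
    (F : EuclideanSpace ℝ (Fin d) → ℝ)
    (hF : F = fun y => (1 / (n : ℝ)) * ∑ i, f i y)
    (x xtilde : EuclideanSpace ℝ (Fin d)) :
    (1 / (n : ℝ)) * ∑ i, ‖gradient (f i) x - gradient (f i) xtilde + gradient F xtilde‖ ^ 2
      ≤ 2 * ‖gradient F x‖ ^ 2 + 2 * L ^ 2 * ‖x - xtilde‖ ^ 2 := by
  have h := avg_norm_sq_svrg_le L f hdiff hlip x xtilde
  simp only [Fintype.card_fin, ← one_div, ← hF] at h
  nlinarith [sq_nonneg ‖gradient F x‖, sq_nonneg (L * ‖x - xtilde‖)]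

/-- Lemma 3: variance bound for the SVRG gradient estimator
`vᵢ = ∇fᵢ(x) − ∇fᵢ(x̃) + ∇f(x̃)`. -/
theorem stmt8 {d n : ℕ} (hn : 1 ≤ n) (L : ℝ) (hL : 0 ≤ L)
    (f : Fin n → EuclideanSpace ℝ (Fin d) → ℝ)
    (hdiff : ∀ i, Differentiable ℝ (f i))
    (hlip : ∀ i, ∀ a b, ‖gradient (f i) a - gradient (f i) b‖ ≤ L * ‖a - b‖)
    (F : EuclideanSpace ℝ (Fin d) → ℝ)
    (hF : F = fun y => (1 / (n : ℝ)) * ∑ i, f i y)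
    (x xtilde : EuclideanSpace ℝ (Fin d)) :
    (1 / (n : ℝ)) * ∑ i, ‖gradient (f i) x - gradient (f i) xtilde + gradient F xtilde‖ ^ 2
      ≤ 2 * ‖gradient F x‖ ^ 2 + 2 * L ^ 2 * ‖x - xtilde‖ ^ 2 :=
  stmt8_general L f hdiff hlip F hF x xtilde
end
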